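/- There exists a constant C > 0 such that for every continuous 2π-periodic function f : ℝ → ℂ with mean zero (i.e., f̂(0) = 0, where û(k) = (1/2π)∫₀^{2π} u(x) e^{−ikx} dx) and with ∑_{k∈ℤ} |k| |f̂(k)|² < ∞, one has ∫₀^{2π} |f(x)|² dx ≤ C · ( ∫₀^{2π} |f(x)| dx ) · ( ∑_{k∈ℤ} |k| |f̂(k)|² )^{1/2}. -/

import Mathlib

/-!
By Parseval, `∫₀^{2π} |f|² = 2π ∑ₖ |f̂(k)|²`, and every coefficient satisfies
`|f̂(k)| ≤ M := (2π)⁻¹ ∫₀^{2π} |f|`. With `H = ∑ₖ |k| |f̂(k)|²` and `f̂(0) = 0`, the modes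
`0 < |k| ≤ t` contribute at most `2tM²` to `∑ₖ |f̂(k)|²` and the modes `|k| > t` at most `H / t`;
the choice `t = √H / M` gives `∑ₖ |f̂(k)|² ≤ 3M√H`.
-/

open MeasureTheory

/-- The `k`-th Fourier coefficient of a `2π`-periodic function `u : ℝ → ℂ`:
`û(k) = (1/2π) ∫₀^{2π} u(x) e^{−ikx} dx`. -/
noncomputable def fourierCoefC (u : ℝ → ℂ) (k : ℤ) : ℂ :=
  (1 / (2 * Real.pi) : ℝ) *
    ∫ x in (0:ℝ)..(2 * Real.pi), u x * Complex.exp (-Complex.I * k * x)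

open Real

noncomputable def puncturedIcc (n : ℕ) : Finset ℤ := (Finset.Icc (-n : ℤ) n).erase 0

theorem card_puncturedIcc (n : ℕ) : (puncturedIcc n).card = 2 * n := by
  rw [puncturedIcc, Finset.card_erase_of_mem (by simp), Int.card_Icc]
  omega

theorem mem_puncturedIcc {n : ℕ} {k : ℤ} : k ∈ puncturedIcc n ↔ k ≠ 0 ∧ |k| ≤ n := by
  simp [puncturedIcc, abs_le, and_comm]

section
variable {E : Type*} [SeminormedAddCommGroup E] {a : ℤ → E} {M : ℝ}

theorem sq_norm_le_abs_mul_sq_norm (h0 : a 0 = 0) (k : ℤ) :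
    ‖a k‖ ^ 2 ≤ |(k : ℝ)| * ‖a k‖ ^ 2 := by
  rcases eq_or_ne k 0 with rfl | hk
  · simp [h0]
  · have : (1 : ℝ) ≤ |(k : ℝ)| := by exact_mod_cast Int.one_le_abs hk
    nlinarith [sq_nonneg ‖a k‖]

theorem summable_sq_norm_of_summable_abs_mul (h0 : a 0 = 0)
    (hH : Summable fun k : ℤ => (|k| : ℝ) * ‖a k‖ ^ 2) :
    Summable fun k => ‖a k‖ ^ 2 :=
  hH.of_nonneg_of_le (fun _ => by positivity) (sq_norm_le_abs_mul_sq_norm h0)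

theorem sq_norm_le_div_add_indicator (hM : ∀ k, ‖a k‖ ≤ M) (h0 : a 0 = 0) {t : ℝ} (ht : 0 < t)
    (k : ℤ) :
    ‖a k‖ ^ 2 ≤ |(k : ℝ)| * ‖a k‖ ^ 2 / t +
      (puncturedIcc ⌊t⌋₊ : Set ℤ).indicator (fun _ => M ^ 2) k := by
  by_cases hk : k ∈ puncturedIcc ⌊t⌋₊
  · rw [Set.indicator_of_mem hk]
    have hsq : ‖a k‖ ^ 2 ≤ M ^ 2 := pow_le_pow_left₀ (norm_nonneg _) (hM k) 2
    have htail : 0 ≤ |(k : ℝ)| * ‖a k‖ ^ 2 / t := by positivity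
    linarith
  rw [Set.indicator_of_notMem hk, add_zero]
  rcases eq_or_ne k 0 with rfl | hk0
  · simp [h0]
  have htk : t ≤ |(k : ℝ)| := by
    have hlt : (⌊t⌋₊ : ℤ) < |k| := by simpa [mem_puncturedIcc, hk0] using hk
    have : (⌊t⌋₊ : ℝ) + 1 ≤ |(k : ℝ)| := by exact_mod_cast hlt
    linarith [Nat.lt_floor_add_one t]
  rw [le_div_iff₀ ht]
  nlinarith [sq_nonneg ‖a k‖]

theorem tsum_sq_norm_le_tsum_abs_mul_div_add (hM : ∀ k, ‖a k‖ ≤ M) (h0 : a 0 = 0)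
    (hH : Summable fun k : ℤ => (|k| : ℝ) * ‖a k‖ ^ 2) {t : ℝ} (ht : 0 < t) :
    ∑' k, ‖a k‖ ^ 2 ≤ (∑' k : ℤ, (|k| : ℝ) * ‖a k‖ ^ 2) / t + 2 * t * M ^ 2 := by
  set s := puncturedIcc ⌊t⌋₊
  have hcard : (s.card : ℝ) = 2 * ⌊t⌋₊ := by exact_mod_cast card_puncturedIcc ⌊t⌋₊
  have hfin : HasSum ((s : Set ℤ).indicator fun _ => M ^ 2) (2 * ⌊t⌋₊ * M ^ 2) := by
    have := hasSum_sum_of_ne_finset_zero (L := .unconditional ℤ)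
      (f := (s : Set ℤ).indicator fun _ => M ^ 2)
      fun k hk => Set.indicator_of_notMem hk _
    rwa [Finset.sum_congr rfl fun k hk => Set.indicator_of_mem (Finset.mem_coe.2 hk) _,
      Finset.sum_const, nsmul_eq_mul, hcard] at this
  have := hasSum_le (sq_norm_le_div_add_indicator hM h0 ht)
    (summable_sq_norm_of_summable_abs_mul h0 hH).hasSum
    ((hH.hasSum.div_const t).add hfin)
  nlinarith [Nat.floor_le ht.le, sq_nonneg M]

theorem tsum_sq_norm_le_three_mul_sqrt (hM : ∀ k, ‖a k‖ ≤ M) (h0 : a 0 = 0)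
    (hH : Summable fun k : ℤ => (|k| : ℝ) * ‖a k‖ ^ 2) :
    ∑' k, ‖a k‖ ^ 2 ≤ 3 * M * √(∑' k : ℤ, (|k| : ℝ) * ‖a k‖ ^ 2) := by
  set H := ∑' k : ℤ, (|k| : ℝ) * ‖a k‖ ^ 2
  have hSH : ∑' k, ‖a k‖ ^ 2 ≤ H :=
    (summable_sq_norm_of_summable_abs_mul h0 hH).tsum_le_tsum (sq_norm_le_abs_mul_sq_norm h0) hH
  rcases (show 0 ≤ M by simpa [h0] using hM 0).eq_or_lt with rfl | hMpos
  · simp [fun k => (hM k).antisymm (norm_nonneg (a k))]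
  rcases (show 0 ≤ H by positivity).eq_or_lt with hH0 | hHpos
  · rw [← hH0] at hSH ⊢
    simpa using hSH
  calc ∑' k, ‖a k‖ ^ 2 ≤ H / (√H / M) + 2 * (√H / M) * M ^ 2 :=
        tsum_sq_norm_le_tsum_abs_mul_div_add hM h0 hH (by positivity)
    _ = 3 * M * √H := by
        have : √H ≠ 0 := (sqrt_pos.2 hHpos).ne'
        field_simp
        rw [sq_sqrt hHpos.le]
        ring

end

theorem fourierCoefC_eq_fourierCoeffOn (u : ℝ → ℂ) (k : ℤ) :
    fourierCoefC u k = fourierCoeffOn two_pi_pos u k := by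
  rw [fourierCoeffOn_eq_integral, fourierCoefC, Complex.real_smul]
  congr 1
  · simp
  refine intervalIntegral.integral_congr fun x _ => ?_
  rw [fourier_coe_apply, smul_eq_mul, mul_comm]
  congr 2
  have : (π : ℂ) ≠ 0 := by exact_mod_cast pi_ne_zero
  push_cast
  field_simp
  ring

theorem norm_fourierCoefC_le (u : ℝ → ℂ) (k : ℤ) :
    ‖fourierCoefC u k‖ ≤ (2 * π)⁻¹ * ∫ x in (0:ℝ)..(2 * π), ‖u x‖ := by
  have hexp (x : ℝ) : ‖u x * Complex.exp (-Complex.I * k * x)‖ = ‖u x‖ := by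
    rw [norm_mul, Complex.norm_exp]
    simp
  rw [fourierCoefC, norm_mul, Complex.norm_real, Real.norm_of_nonneg (by positivity), one_div]
  gcongr
  refine (intervalIntegral.norm_integral_le_integral_norm two_pi_pos.le).trans_eq ?_
  simp only [hexp]

theorem tsum_sq_norm_fourierCoefC {u : ℝ → ℂ}
    (hu : MemLp u 2 (volume.restrict (Set.Ioc 0 (2 * π)))) :
    ∑' k : ℤ, ‖fourierCoefC u k‖ ^ 2 = (2 * π)⁻¹ * ∫ x in (0:ℝ)..(2 * π), ‖u x‖ ^ 2 := by
  simpa [fourierCoefC_eq_fourierCoeffOn] using tsum_sq_fourierCoeffOn two_pi_pos hu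

/-- Interpolation inequality `‖f‖²_{L²(𝕋)} ≲ ‖f‖_{L¹(𝕋)} ‖f‖_{Ḣ^{1/2}(𝕋)}` for
continuous mean-zero `2π`-periodic functions, where
`‖f‖²_{Ḣ^{1/2}} = ∑_{k∈ℤ} |k||f̂(k)|²`. -/
theorem L2_L1_Hhalf_interpolation :
    ∃ C : ℝ, 0 < C ∧
      ∀ f : ℝ → ℂ, Continuous f → Function.Periodic f (2 * Real.pi) →
        fourierCoefC f 0 = 0 →
        Summable (fun k : ℤ => (|k| : ℝ) * ‖fourierCoefC f k‖ ^ 2) →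
        ∫ x in (0:ℝ)..(2 * Real.pi), ‖f x‖ ^ 2 ≤
          C * (∫ x in (0:ℝ)..(2 * Real.pi), ‖f x‖) *
            Real.sqrt (∑' k : ℤ, (|k| : ℝ) * ‖fourierCoefC f k‖ ^ 2) := by
  refine ⟨3, by norm_num, fun f hf _ h0 hH => ?_⟩
  have hL2 : MemLp f 2 (volume.restrict (Set.Ioc 0 (2 * π))) :=
    (memLp_two_iff_integrable_sq_norm hf.aestronglyMeasurable).2 (hf.norm.pow 2).integrableOn_Ioc
  have hbound := tsum_sq_norm_le_three_mul_sqrt (norm_fourierCoefC_le f) h0 hH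
  rw [tsum_sq_norm_fourierCoefC hL2] at hbound
  have hπ := two_pi_pos
  calc ∫ x in (0:ℝ)..(2 * π), ‖f x‖ ^ 2
      = 2 * π * ((2 * π)⁻¹ * ∫ x in (0:ℝ)..(2 * π), ‖f x‖ ^ 2) := by field_simp
    _ ≤ 2 * π * (3 * ((2 * π)⁻¹ * ∫ x in (0:ℝ)..(2 * π), ‖f x‖) *
          √(∑' k : ℤ, (|k| : ℝ) * ‖fourierCoefC f k‖ ^ 2)) := by gcongr
    _ = _ := by field_simp
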